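/- arXiv:math/0611624 — 2 statements merged into one kernel-verified Lean document; each statement's English description precedes it below -/
import Mathlib

section
/- For every integer n ≥ 2 and every complex x (in the domain where both sides are defined), Zagier's modified polylogarithm satisfies the distribution relation ℒₙ(x) + ℒₙ(−x) = ℒₙ(x²)/2^{n−1}. -/
open scoped Real

noncomputable def Li : ℕ → ℂ → ℂ
  | 0, x => x / (1 - x)
  | 1, x => -Complex.log (1 - x)
  | (k+2), x => ∫ t in (0:ℝ)..1, Li (k+1) ((t : ℂ) * x) / (t : ℂ)

/-- `reₙ`: the real part if `n` is odd, the imaginary part if `n` is even. -/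
noncomputable def reN (n : ℕ) (z : ℂ) : ℝ := if Odd n then z.re else z.im

/-- Zagier's single-valued modification of the `n`-th polylogarithm. -/
noncomputable def sv (n : ℕ) (x : ℂ) : ℝ :=
  reN n (∑ j ∈ Finset.range n,
    (2:ℂ)^j * ((bernoulli j : ℚ) : ℂ) / (Nat.factorial j : ℂ)
      * ((Real.log ‖x‖ : ℂ))^j * Li (n - j) x)

/-!
Since `log ‖x²‖ = 2 log ‖x‖`, the weights `2ʲ` make the relation hold term by term once
`Li m x + Li m (-x) = Li m (x²) / 2^(m-1)` for every `m ≥ 1`. For `m = 1` this is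
`log (1 - x) + log (1 + x) = log (1 - x²)`, valid because `1 - x` and `1 + x` lie in the slit
plane with imaginary parts of opposite signs. The step `m → m + 1` integrates the relation at
`t x` against `dt / t` and substitutes `s = t²`. The integrals converge because
`‖Li m (t z)‖ = O(t)` on `[0, 1]`, a bound that propagates along the same recursion.
-/

open MeasureTheory Set intervalIntegral Complex
open scoped Interval

namespace Complex

lemma arg_nonpos_of_mem_slitPlane {z : ℂ} (hz : z ∈ slitPlane) (him : z.im ≤ 0) : z.arg ≤ 0 := by
  rcases him.lt_or_eq with h | h
  · exact (arg_neg_iff.mpr h).le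
  · have hre : 0 < z.re := (mem_slitPlane_iff.mp hz).resolve_right (not_not.mpr h)
    exact (arg_eq_zero_iff.mpr ⟨hre.le, h⟩).le

lemma log_mul_of_im_mul_nonpos {a b : ℂ} (ha : a ∈ slitPlane) (hb : b ∈ slitPlane)
    (hab : a.im * b.im ≤ 0) : log (a * b) = log a + log b := by
  refine log_mul (slitPlane_ne_zero ha) (slitPlane_ne_zero hb) ⟨?_, ?_⟩
  · by_contra! h
    have ha' : a.im < 0 := arg_neg_iff.mp (by linarith [neg_pi_lt_arg b])
    have hb' : b.im < 0 := arg_neg_iff.mp (by linarith [neg_pi_lt_arg a])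
    nlinarith
  · by_contra! h
    have hπa := (arg_le_pi a).lt_of_ne (slitPlane_arg_ne_pi ha)
    have hπb := (arg_le_pi b).lt_of_ne (slitPlane_arg_ne_pi hb)
    have ha' : 0 < a.im := by
      by_contra! ha'; linarith [arg_nonpos_of_mem_slitPlane ha ha']
    have hb' : 0 < b.im := by
      by_contra! hb'; linarith [arg_nonpos_of_mem_slitPlane hb hb']
    nlinarith

lemma one_sub_ofReal_mul_mem_slitPlane {z : ℂ} (hz : 1 - z ∈ slitPlane) {t : ℝ}
    (ht : t ∈ Icc (0 : ℝ) 1) : 1 - t * z ∈ slitPlane := by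
  rw [sub_eq_add_neg] at hz
  simpa [sub_eq_add_neg, real_smul] using starConvex_one_slitPlane.add_smul_mem hz ht.1 ht.2

lemma one_sub_mem_slitPlane_of_im_ne_zero_or_norm_lt_one {z : ℂ}
    (hz : z.im ≠ 0 ∨ ‖z‖ < 1) : 1 - z ∈ slitPlane := by
  rcases hz with h | h
  · exact mem_slitPlane_iff.mpr (Or.inr (by simpa using h))
  · simpa [sub_eq_add_neg] using mem_slitPlane_of_norm_lt_one (z := -z) (by simpa using h)

end Complex

def LinearlyBoundedOnSegment (f : ℂ → ℂ) (z : ℂ) : Prop :=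
  ContinuousOn (fun t : ℝ => f (t * z)) (Icc 0 1) ∧
    ∃ C, ∀ t ∈ Icc (0 : ℝ) 1, ‖f (t * z)‖ ≤ C * t

namespace LinearlyBoundedOnSegment

variable {f : ℂ → ℂ} {z : ℂ}

lemma of_hasDerivAt {f' : ℝ → ℂ}
    (hf : ∀ t ∈ Icc (0 : ℝ) 1, HasDerivAt (fun t : ℝ => f (t * z)) (f' t) t)
    (hf' : ContinuousOn f' (Icc 0 1)) (h0 : f 0 = 0) : LinearlyBoundedOnSegment f z := by
  refine ⟨fun t ht => (hf t ht).continuousAt.continuousWithinAt, ?_⟩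
  obtain ⟨C, hC⟩ := isCompact_Icc.exists_bound_of_continuousOn hf'
  refine ⟨C, fun t ht => ?_⟩
  have := (convex_Icc (0 : ℝ) 1).norm_image_sub_le_of_norm_hasDerivWithin_le
    (fun u hu => (hf u hu).hasDerivWithinAt) hC (left_mem_Icc.mpr zero_le_one) ht
  simpa [h0, abs_of_nonneg ht.1] using this

lemma map_zero (h : LinearlyBoundedOnSegment f z) : f 0 = 0 := by
  obtain ⟨C, hC⟩ := h.2
  simpa using hC 0 (left_mem_Icc.mpr zero_le_one)

lemma exists_norm_div_le (h : LinearlyBoundedOnSegment f z) :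
    ∃ C, ∀ t ∈ Ioc (0 : ℝ) 1, ‖f (t * z) / t‖ ≤ C := by
  obtain ⟨C, hC⟩ := h.2
  refine ⟨C, fun t ht => ?_⟩
  rw [norm_div, norm_real, Real.norm_of_nonneg ht.1.le, div_le_iff₀ ht.1]
  exact hC t (Ioc_subset_Icc_self ht)

lemma intervalIntegrable_div (h : LinearlyBoundedOnSegment f z) :
    IntervalIntegrable (fun t : ℝ => f (t * z) / t) volume 0 1 := by
  obtain ⟨C, hC⟩ := h.exists_norm_div_le
  rw [intervalIntegrable_iff_integrableOn_Ioc_of_le zero_le_one]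
  refine Integrable.mono' (integrableOn_const measure_Ioc_lt_top.ne) ?_
    ((ae_restrict_iff' measurableSet_Ioc).mpr (ae_of_all _ hC))
  refine ContinuousOn.aestronglyMeasurable ?_ measurableSet_Ioc
  exact (h.1.mono Ioc_subset_Icc_self).div (by fun_prop) fun t ht => ofReal_ne_zero.mpr ht.1.ne'

lemma integral_div_ofReal_mul (h : LinearlyBoundedOnSegment f z) (t : ℝ) :
    ∫ s in (0 : ℝ)..1, f (s * (t * z)) / s = ∫ u in (0 : ℝ)..t, f (u * z) / u := by
  set g : ℝ → ℂ := fun u => f (u * z) / u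
  have hpoint : ∀ s : ℝ, f (s * (t * z)) / s = t • g (s * t) := by
    intro s
    rcases eq_or_ne t 0 with rfl | ht
    · simp [h.map_zero]
    rcases eq_or_ne s 0 with rfl | hs
    · simp [g]
    have ht' : (t : ℂ) ≠ 0 := ofReal_ne_zero.mpr ht
    have hs' : (s : ℂ) ≠ 0 := ofReal_ne_zero.mpr hs
    rw [real_smul]
    simp only [g]
    push_cast
    field_simp
  simp_rw [hpoint]
  rw [intervalIntegral.integral_smul, smul_integral_comp_mul_right, zero_mul, one_mul]

lemma integral_div (h : LinearlyBoundedOnSegment f z) :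
    LinearlyBoundedOnSegment (fun w => ∫ s in (0 : ℝ)..1, f (s * w) / s) z := by
  obtain ⟨C, hC⟩ := h.exists_norm_div_le
  refine ⟨?_, C, fun t ht => ?_⟩
  · refine ContinuousOn.congr ?_ fun t _ => h.integral_div_ofReal_mul t
    simpa [uIcc_of_le zero_le_one] using
      continuousOn_primitive_interval' h.intervalIntegrable_div left_mem_uIcc
  · beta_reduce
    rw [h.integral_div_ofReal_mul]
    refine (norm_integral_le_of_norm_le_const fun u hu => hC u ?_).trans_eq ?_
    · rw [uIoc_of_le ht.1] at hu
      exact ⟨hu.1, hu.2.trans ht.2⟩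
    · rw [sub_zero, abs_of_nonneg ht.1]

end LinearlyBoundedOnSegment

lemma linearlyBoundedOnSegment_Li_one {z : ℂ} (hz : 1 - z ∈ slitPlane) :
    LinearlyBoundedOnSegment (Li 1) z := by
  have hne (t : ℝ) (ht : t ∈ Icc (0 : ℝ) 1) : 1 - t * z ≠ 0 :=
    slitPlane_ne_zero (one_sub_ofReal_mul_mem_slitPlane hz ht)
  refine .of_hasDerivAt (f' := fun t => z / (1 - t * z)) (fun t ht => ?_)
    (continuousOn_const.div (by fun_prop) hne) (by simp [Li])
  have hlog := ((((hasDerivAt_mul_const z).const_sub 1).clog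
    (one_sub_ofReal_mul_mem_slitPlane hz ht)).neg).comp_ofReal (z := t)
  simpa [Li, neg_div] using hlog

lemma linearlyBoundedOnSegment_Li (k : ℕ) {z : ℂ} (hz : 1 - z ∈ slitPlane) :
    LinearlyBoundedOnSegment (Li (k + 1)) z := by
  induction k with
  | zero => exact linearlyBoundedOnSegment_Li_one hz
  | succ k ih => exact ih.integral_div

lemma integral_comp_sq_div (g : ℝ → ℂ) :
    ∫ t in (0 : ℝ)..1, g (t ^ 2) / t = (∫ s in (0 : ℝ)..1, g s / s) / 2 := by
  have hsq : (fun t : ℝ => t ^ 2) '' Ioc 0 1 = Ioc 0 1 := by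
    refine Subset.antisymm ?_
      fun s hs => ⟨√s, ⟨Real.sqrt_pos.mpr hs.1, Real.sqrt_le_one.mpr hs.2⟩, Real.sq_sqrt hs.1.le⟩
    rintro _ ⟨t, ht, rfl⟩
    exact ⟨pow_pos ht.1 2, pow_le_one₀ ht.1.le ht.2⟩
  have hsubst := integral_image_eq_integral_abs_deriv_smul (f := fun t : ℝ => t ^ 2)
    (measurableSet_Ioc (a := 0) (b := 1)) (fun t _ => (hasDerivAt_pow 2 t).hasDerivWithinAt)
    (fun a ha b hb hab => (pow_left_inj₀ ha.1.le hb.1.le two_ne_zero).mp hab)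
    (fun s => g s / s)
  rw [hsq] at hsubst
  rw [integral_of_le zero_le_one, integral_of_le zero_le_one, hsubst,
    eq_div_iff two_ne_zero, ← MeasureTheory.integral_mul_const]
  refine setIntegral_congr_fun measurableSet_Ioc fun t ht => ?_
  have ht' : (t : ℂ) ≠ 0 := ofReal_ne_zero.mpr ht.1.ne'
  rw [abs_of_pos (by simpa using ht.1), real_smul]
  push_cast
  field_simp

lemma Li_one_add_Li_one_neg {x : ℂ} (hx : 1 - x ∈ slitPlane) (hx' : 1 + x ∈ slitPlane) :
    Li 1 x + Li 1 (-x) = Li 1 (x ^ 2) := by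
  have hprod : (1 - x) * (1 + x) = 1 - x ^ 2 := by ring
  have him : (1 - x).im * (1 + x).im ≤ 0 := by simpa using mul_self_nonneg x.im
  simp only [Li, sub_neg_eq_add, ← hprod, log_mul_of_im_mul_nonpos hx hx' him]
  ring

lemma Li_succ_add_Li_succ_neg (k : ℕ) {x : ℂ} (hx : 1 - x ∈ slitPlane)
    (hx' : 1 + x ∈ slitPlane) : Li (k + 1) x + Li (k + 1) (-x) = Li (k + 1) (x ^ 2) / 2 ^ k := by
  induction k generalizing x with
  | zero => simpa using Li_one_add_Li_one_neg hx hx'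
  | succ k ih =>
    have hscaled : ∀ t ∈ Ι (0 : ℝ) 1, Li (k + 1) (t * x) / t + Li (k + 1) (t * -x) / t
        = Li (k + 1) (((t ^ 2 : ℝ) : ℂ) * x ^ 2) / t / 2 ^ k := by
      intro t ht
      rw [uIoc_of_le zero_le_one] at ht
      have hrel := ih (x := t * x) (one_sub_ofReal_mul_mem_slitPlane hx (Ioc_subset_Icc_self ht))
        (by simpa [sub_eq_add_neg] using
          one_sub_ofReal_mul_mem_slitPlane (z := -x) (by simpa using hx') (Ioc_subset_Icc_self ht))
      rw [mul_neg, ← add_div, hrel]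
      push_cast
      ring_nf
    have hint (y : ℂ) (hy : 1 - y ∈ slitPlane) :=
      (linearlyBoundedOnSegment_Li k hy).intervalIntegrable_div
    calc Li (k + 2) x + Li (k + 2) (-x)
        = ∫ t in (0 : ℝ)..1, (Li (k + 1) (t * x) / t + Li (k + 1) (t * -x) / t) :=
          (integral_add (hint x hx) (hint (-x) (by simpa using hx'))).symm
      _ = (∫ t in (0 : ℝ)..1, Li (k + 1) (((t ^ 2 : ℝ) : ℂ) * x ^ 2) / t) / 2 ^ k := by
          rw [integral_congr_ae (ae_of_all _ hscaled), intervalIntegral.integral_div]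
      _ = Li (k + 2) (x ^ 2) / 2 ^ (k + 1) := by
          rw [integral_comp_sq_div (fun s => Li (k + 1) (s * x ^ 2)), div_div, ← pow_succ']
          rfl

lemma sum_Li_add_sum_Li_neg (a : ℕ → ℂ) (L : ℂ) (n : ℕ) {x : ℂ} (hx : 1 - x ∈ slitPlane)
    (hx' : 1 + x ∈ slitPlane) :
    ∑ j ∈ Finset.range n, a j * L ^ j * Li (n - j) x
        + ∑ j ∈ Finset.range n, a j * L ^ j * Li (n - j) (-x)
      = (∑ j ∈ Finset.range n, a j * (2 * L) ^ j * Li (n - j) (x ^ 2)) / 2 ^ (n - 1) := by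
  rw [← Finset.sum_add_distrib, Finset.sum_div]
  refine Finset.sum_congr rfl fun j hj => ?_
  obtain ⟨m, hm⟩ : ∃ m, n - j = m + 1 := ⟨n - j - 1, by grind⟩
  have hpow : (2 : ℂ) ^ (n - 1) = 2 ^ j * 2 ^ m := by
    rw [← pow_add]
    congr 1
    grind
  rw [hm, ← mul_add, Li_succ_add_Li_succ_neg m hx hx', hpow, mul_pow]
  field_simp

lemma reN_add (n : ℕ) (z w : ℂ) : reN n (z + w) = reN n z + reN n w := by
  unfold reN
  split_ifs <;> simp

lemma reN_div_ofReal (n : ℕ) (z : ℂ) (r : ℝ) : reN n (z / r) = reN n z / r := by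
  unfold reN
  split_ifs <;> simp [div_ofReal_re, div_ofReal_im]

theorem sv_distribution_general (n : ℕ) (x : ℂ)
    (hdom : x.im ≠ 0 ∨ ‖x‖ < 1) :
    sv n x + sv n (-x) = sv n (x^2) / 2^(n-1) := by
  have hx := one_sub_mem_slitPlane_of_im_ne_zero_or_norm_lt_one hdom
  have hx' : 1 + x ∈ slitPlane := by
    simpa using one_sub_mem_slitPlane_of_im_ne_zero_or_norm_lt_one (z := -x) (by simpa using hdom)
  have hlog : ((Real.log ‖x ^ 2‖ : ℝ) : ℂ) = 2 * Real.log ‖x‖ := by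
    rw [norm_pow, Real.log_pow]
    push_cast
    ring
  have hpow : (2 : ℂ) ^ (n - 1) = ((2 ^ (n - 1) : ℝ) : ℂ) := by push_cast; rfl
  rw [sv, sv, sv, norm_neg, ← reN_add, sum_Li_add_sum_Li_neg _ _ n hx hx', hlog, hpow,
    reN_div_ofReal]

/-- The distribution relation `ℒₙ(x) + ℒₙ(-x) = ℒₙ(x²)/2^(n-1)` for `n ≥ 2`,
in the domain where both sides are defined (i.e. excluding real `x` with `|x| ≥ 1`,
so that `x`, `-x` and `x²` avoid the cut `[1,∞)`). -/
theorem sv_distribution (n : ℕ) (hn : 2 ≤ n) (x : ℂ)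
    (hdom : x.im ≠ 0 ∨ ‖x‖ < 1) :
    sv n x + sv n (-x) = sv n (x^2) / 2^(n-1) :=
  sv_distribution_general n x hdom
end

section
/- ∑_{k=1}^∞ (2/(k·2ᵏ)) ∑_{l=1}^{k} C(k,l) (1−(−1)ˡ)/l = π²/2. -/
open scoped Real

open Finset

/-!
All terms are nonnegative, so the order of summation may be swapped. Since
`C(k, l) / k = C(k - 1, l - 1) / l`, the negative binomial series gives
`∑_k C(k, l) x^k / k = x^l / (l (1 - x)^l)`, which is `1 / l` at `x = 1/2`; hence the `l`-th
column sums to `2 (1 - (-1)^l) / l²`. Only odd `l` contribute, and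
`∑_{l odd} 1 / l² = (1 - 1/4) ζ(2) = π² / 8`.
-/

theorem hasSum_choose_mul_pow_div {𝕜 : Type*} [NormedField 𝕜] [CompleteSpace 𝕜]
    [CharZero 𝕜] (n : ℕ) {x : 𝕜} (hx : ‖x‖ < 1) :
    HasSum (fun k : ℕ => (k.choose (n + 1) : 𝕜) * x ^ k / k)
      (x ^ (n + 1) / ((n + 1) * (1 - x) ^ (n + 1))) := by
  have hgeo := (hasSum_choose_mul_geometric_of_norm_lt_one n hx).mul_left (x ^ (n + 1) / (n + 1))
  have hterm (m : ℕ) : x ^ (n + 1) / (n + 1) * ((m + n).choose n * x ^ m) =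
      ((m + (n + 1)).choose (n + 1) : 𝕜) * x ^ (m + (n + 1)) / (m + (n + 1) : ℕ) := by
    have key : ((m + n + 1 : ℕ) : 𝕜) * (m + n).choose n =
        (m + n + 1).choose (n + 1) * (n + 1) := by
      exact_mod_cast Nat.add_one_mul_choose_eq (m + n) n
    have hne : (m + n + 1 : 𝕜) ≠ 0 := by exact_mod_cast (m + n).succ_ne_zero
    rw [← add_assoc]
    push_cast at key ⊢
    field_simp
    linear_combination x ^ (m + n + 1) * key
  have hzero : ∑ i ∈ range (n + 1), (i.choose (n + 1) : 𝕜) * x ^ i / i = 0 :=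
    sum_eq_zero fun i hi => by simp [Nat.choose_eq_zero_of_lt (mem_range.1 hi)]
  rw [← hasSum_nat_add_iff' (n + 1), hzero, sub_zero]
  simp_rw [hterm, mul_one_div, div_div] at hgeo
  exact hgeo

theorem hasSum_tsum_swap_of_nonneg {β γ : Type*} {f : β → γ → ℝ} (hf : ∀ b c, 0 ≤ f b c)
    {g : γ → ℝ} {s : ℝ} (hg : ∀ c, HasSum (fun b => f b c) (g c)) (hs : HasSum g s) :
    HasSum (fun b => ∑' c, f b c) s := by
  set P : γ × β → ℝ := fun p => f p.2 p.1
  have hP : Summable P := (summable_prod_of_nonneg fun p => hf _ _).2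
    ⟨fun c => (hg c).summable, by simpa only [P, (hg _).tsum_eq] using hs.summable⟩
  have hPs : HasSum P s := (hP.hasSum.prod_fiberwise hg).unique hs ▸ hP.hasSum
  have hswap : HasSum (P ∘ Equiv.prodComm β γ) s := (Equiv.prodComm β γ).hasSum_iff.2 hPs
  exact hswap.prod_fiberwise fun b =>
    (((Equiv.prodComm β γ).summable_iff.2 hP).prod_factor b).hasSum

theorem hasSum_one_div_odd_sq :
    HasSum (fun k : ℕ => 1 / ((2 * k + 1 : ℕ) : ℝ) ^ 2) (π ^ 2 / 8) := by
  have heven : HasSum (fun k : ℕ => 1 / ((2 * k : ℕ) : ℝ) ^ 2) (π ^ 2 / 24) := by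
    rw [show π ^ 2 / 24 = 1 / 4 * (π ^ 2 / 6) by ring]
    exact (hasSum_zeta_two.mul_left _).congr_fun fun k => by push_cast; ring
  have hodd : HasSum (fun k : ℕ => 1 / ((2 * k + 1 : ℕ) : ℝ) ^ 2)
      (∑' k : ℕ, 1 / ((2 * k + 1 : ℕ) : ℝ) ^ 2) :=
    (hasSum_zeta_two.summable.comp_injective (i := fun k => 2 * k + 1)
      fun a b h => by simp only at h; omega).hasSum
  have htotal :=
    (HasSum.even_add_odd (f := fun n : ℕ => 1 / (n : ℝ) ^ 2) heven hodd).unique hasSum_zeta_two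
  rwa [show π ^ 2 / 8 = ∑' k : ℕ, 1 / ((2 * k + 1 : ℕ) : ℝ) ^ 2 by linarith]

theorem hasSum_one_sub_neg_one_pow_div_sq :
    HasSum (fun l : ℕ => (1 - (-1 : ℝ) ^ l) / (l : ℝ) ^ 2) (π ^ 2 / 4) := by
  have heven : HasSum (fun k : ℕ => (1 - (-1 : ℝ) ^ (2 * k)) / ((2 * k : ℕ) : ℝ) ^ 2) 0 :=
    hasSum_zero.congr_fun fun k => by simp [pow_mul]
  have hodd : HasSum (fun k : ℕ => (1 - (-1 : ℝ) ^ (2 * k + 1)) / ((2 * k + 1 : ℕ) : ℝ) ^ 2)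
      (π ^ 2 / 4) := by
    rw [show π ^ 2 / 4 = 2 * (π ^ 2 / 8) by ring]
    exact (hasSum_one_div_odd_sq.mul_left 2).congr_fun fun k => by
      rw [pow_succ, pow_mul]; ring
  simpa using
    HasSum.even_add_odd (f := fun l : ℕ => (1 - (-1 : ℝ) ^ l) / (l : ℝ) ^ 2) heven hodd

theorem hasSum_two_div_mul_two_pow_mul_choose (l : ℕ) :
    HasSum
      (fun k : ℕ => 2 / ((k : ℝ) * 2 ^ k) * ((k.choose l : ℝ) * (1 - (-1 : ℝ) ^ l) / l))
      (2 * ((1 - (-1 : ℝ) ^ l) / (l : ℝ) ^ 2)) := by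
  cases l with
  | zero => simp
  | succ n =>
    have h := hasSum_choose_mul_pow_div n (x := (2⁻¹ : ℝ)) (by norm_num [abs_of_pos])
    rw [show (2⁻¹ : ℝ) ^ (n + 1) / ((n + 1) * (1 - 2⁻¹) ^ (n + 1)) = 1 / (n + 1) by
      norm_num; field_simp] at h
    rw [show 2 * ((1 - (-1 : ℝ) ^ (n + 1)) / ((n + 1 : ℕ) : ℝ) ^ 2) =
      2 * (1 - (-1) ^ (n + 1)) / (n + 1) * (1 / (n + 1)) by push_cast; field_simp]
    exact (h.mul_left _).congr_fun fun k => by rw [Nat.cast_succ, inv_pow]; ring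

theorem sum_Icc_one_eq_tsum {M : Type*} [AddCommMonoid M] [TopologicalSpace M] {f : ℕ → M}
    (k : ℕ) (hf₀ : f 0 = 0) (hf : ∀ l, k < l → f l = 0) :
    ∑ l ∈ Icc 1 k, f l = ∑' l, f l := by
  refine (tsum_eq_sum fun l hl => ?_).symm
  rcases Nat.eq_zero_or_pos l with rfl | hpos
  · exact hf₀
  · exact hf l (by simp only [mem_Icc, not_and, not_le] at hl; exact hl hpos)

/-- `∑_{k=1}^∞ (2/(k·2^k)) ∑_{l=1}^{k} C(k,l)(1−(−1)^l)/l = π²/2`. -/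
theorem double_sum_pi_sq :
    ∑' k : ℕ+, (2 / ((k : ℕ) * 2^(k : ℕ)) : ℝ) *
      ∑ l ∈ Finset.Icc 1 (k : ℕ), (Nat.choose (k : ℕ) l : ℝ) * (1 - (-1:ℝ)^l) / l
    = π^2 / 2 := by
  have hrow (k : ℕ) :
      (2 / (k * 2 ^ k) : ℝ) * ∑ l ∈ Icc 1 k, (k.choose l : ℝ) * (1 - (-1 : ℝ) ^ l) / l =
        ∑' l, 2 / ((k : ℝ) * 2 ^ k) * ((k.choose l : ℝ) * (1 - (-1 : ℝ) ^ l) / l) := by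
    rw [mul_sum, sum_Icc_one_eq_tsum k (by simp) fun l hl => by
      simp [Nat.choose_eq_zero_of_lt hl]]
  have hnonneg (k l : ℕ) :
      0 ≤ 2 / ((k : ℝ) * 2 ^ k) * ((k.choose l : ℝ) * (1 - (-1 : ℝ) ^ l) / l) := by
    have : 0 ≤ 1 - (-1 : ℝ) ^ l := sub_nonneg.2 ((le_abs_self _).trans (abs_neg_one_pow l).le)
    positivity
  have hcols := hasSum_tsum_swap_of_nonneg hnonneg
    hasSum_two_div_mul_two_pow_mul_choose (hasSum_one_sub_neg_one_pow_div_sq.mul_left 2)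
  rw [tsum_pnat_eq_tsum_of_eq_zero (f := fun k : ℕ => (2 / (k * 2 ^ k) : ℝ) *
      ∑ l ∈ Icc 1 k, (k.choose l : ℝ) * (1 - (-1 : ℝ) ^ l) / l) (by simp),
    tsum_congr hrow, hcols.tsum_eq]
  ring
end
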